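/- arXiv:2408.15476 — 6 statements merged into one kernel-verified Lean document; each statement's English description precedes it below -/
import Mathlib

section
/- Let i ≥ 1 and j ≥ 0 be integers and let A be a symmetric n×n matrix with entries in {0,1} (the adjacency matrix of a graph on n vertices with at most one self-loop per vertex), with i + j + 1 ≤ n. Then λ_{i+1}(A) − λ_{n−j}(A) ≤ (n/2)·√((i+j+1)/(i(j+1))), where λ_1 ≥ λ_2 ≥ ⋯ ≥ λ_n are the eigenvalues of A in nonincreasing order. -/
/-!
Write `A = M + J / 2` with `J` the all-ones matrix. The entries of `M` are `±1/2`, so the squares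
of its eigenvalues `ν₁ ≥ ⋯ ≥ νₙ` sum to `‖M‖²_F = n² / 4`. Since `J / 2` is positive semidefinite
of rank one, comparing dimensions of eigenvector spans (Courant–Fischer) gives the interlacing
`λ_{i+1}(A) ≤ νᵢ` and `ν_{n-j} ≤ λ_{n-j}(A)`. With `x = max νᵢ 0` and `y = min ν_{n-j} 0`,
antitonicity gives `i x² + (j + 1) y² ≤ ∑ ν_k² = n² / 4`, and Cauchy–Schwarz turns this into
`x - y ≤ (n / 2) √(1 / i + 1 / (j + 1))`.
-/

open Finset Module Submodule Matrix
open scoped RealInnerProductSpace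

theorem Submodule.finrank_add_finrank_le_finrank_add_finrank_inf {K M : Type*} [DivisionRing K]
    [AddCommGroup M] [Module K M] [FiniteDimensional K M] (V W : Submodule K M) :
    finrank K V + finrank K W ≤ finrank K M + finrank K ↥(V ⊓ W) := by
  rw [← finrank_sup_add_finrank_inf_eq]
  exact Nat.add_le_add_right (finrank_le _) _

theorem card_filter_eq_of_map_univ_eq {ι ι' α : Type*} [Fintype ι] [Fintype ι'] {f : ι → α}
    {g : ι' → α} (h : univ.val.map f = univ.val.map g) (p : α → Prop) [DecidablePred p] :
    #{k | p (f k)} = #{k | p (g k)} := by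
  simp only [card_def, filter_val, ← Multiset.countP_map, h]

theorem le_card_filter_le_of_antitone {α ι : Type*} [Preorder α] [DecidableLE α] [Fintype ι] {n : ℕ}
    {μ : Fin n → α} {f : ι → α} (hμ : Antitone μ) (h : univ.val.map μ = univ.val.map f)
    (m : Fin n) : m + 1 ≤ #{k | μ m ≤ f k} := by
  rw [← card_filter_eq_of_map_univ_eq h (μ m ≤ ·), ← Fin.card_Iic]
  exact card_le_card fun k hk => mem_filter.2 ⟨mem_univ _, hμ (mem_Iic.1 hk)⟩

theorem le_card_filter_ge_of_antitone {α ι : Type*} [Preorder α] [DecidableLE α] [Fintype ι] {n : ℕ}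
    {μ : Fin n → α} {f : ι → α} (hμ : Antitone μ) (h : univ.val.map μ = univ.val.map f)
    (m : Fin n) : n - m ≤ #{k | f k ≤ μ m} := by
  rw [← card_filter_eq_of_map_univ_eq h (· ≤ μ m), ← Fin.card_Ici]
  exact card_le_card fun k hk => mem_filter.2 ⟨mem_univ _, hμ (mem_Ici.1 hk)⟩

theorem mul_sq_add_mul_sq_le_sum_sq_of_antitone {n : ℕ} {ν : Fin n → ℝ} (hν : Antitone ν)
    {p q : Fin n} (hpq : p < q) :
    ((p : ℝ) + 1) * max (ν p) 0 ^ 2 + ((n : ℝ) - q) * min (ν q) 0 ^ 2 ≤ ∑ k, ν k ^ 2 := by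
  have hdisj : Disjoint (Iic p) (Ici q) :=
    disjoint_left.2 fun k hp hq => (mem_Iic.1 hp).not_gt (hpq.trans_le (mem_Ici.1 hq))
  have hhead : ((p : ℝ) + 1) * max (ν p) 0 ^ 2 ≤ ∑ k ∈ Iic p, ν k ^ 2 := by
    have := card_nsmul_le_sum (Iic p) (fun k => ν k ^ 2) (max (ν p) 0 ^ 2) fun k hk => by
      have := hν (mem_Iic.1 hk)
      rcases le_total (ν p) 0 with h | h <;> simp [h] <;> nlinarith
    simpa using this
  have htail : ((n : ℝ) - q) * min (ν q) 0 ^ 2 ≤ ∑ k ∈ Ici q, ν k ^ 2 := by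
    have := card_nsmul_le_sum (Ici q) (fun k => ν k ^ 2) (min (ν q) 0 ^ 2) fun k hk => by
      have := hν (mem_Ici.1 hk)
      rcases le_total (ν q) 0 with h | h <;> simp [h] <;> nlinarith
    simpa [Nat.cast_sub q.is_lt.le] using this
  calc _ ≤ ∑ k ∈ Iic p, ν k ^ 2 + ∑ k ∈ Ici q, ν k ^ 2 := add_le_add hhead htail
    _ = ∑ k ∈ Iic p ∪ Ici q, ν k ^ 2 := (sum_union hdisj).symm
    _ ≤ ∑ k, ν k ^ 2 := sum_le_sum_of_subset_of_nonneg (subset_univ _) fun _ _ _ => sq_nonneg _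

theorem sub_le_mul_sqrt_of_mul_sq_add_mul_sq_le {a b c x y : ℝ} (ha : 0 < a) (hb : 0 < b)
    (hc : 0 ≤ c) (h : a * x ^ 2 + b * y ^ 2 ≤ c ^ 2) : x - y ≤ c * √((a + b) / (a * b)) := by
  have hsq : (x - y) ^ 2 ≤ (c * √((a + b) / (a * b))) ^ 2 := by
    rw [mul_pow, Real.sq_sqrt (by positivity), mul_div_assoc', le_div_iff₀ (by positivity)]
    nlinarith [sq_nonneg (a * x + b * y), mul_le_mul_of_nonneg_left h (add_pos ha hb).le]
  exact le_of_sq_le_sq hsq (by positivity)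

section Eigenbasis

variable {E ι : Type*} [NormedAddCommGroup E] [InnerProductSpace ℝ E] [Fintype ι]
  {T : E →ₗ[ℝ] E} {b : OrthonormalBasis ι ℝ E} {e : ι → ℝ} {s : Finset ι} {t : ℝ} {v : E}

theorem inner_apply_eq_sum_eigenvalue_mul_sq (hb : ∀ k, T (b k) = e k • b k) (v : E) :
    ⟪v, T v⟫ = ∑ k, e k * ⟪b k, v⟫ ^ 2 := by
  have hTv : T v = ∑ k, (⟪b k, v⟫ * e k) • b k := by
    conv_lhs => rw [← b.sum_repr' v]
    simp only [map_sum, map_smul, hb, smul_smul]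
  rw [hTv, inner_sum]
  exact sum_congr rfl fun k _ => by rw [real_inner_smul_right, real_inner_comm]; ring

theorem inner_eq_zero_of_mem_span_image (hv : v ∈ span ℝ (b '' s))
    {k : ι} (hk : k ∉ s) : ⟪b k, v⟫ = 0 := by
  have : span ℝ (b '' s) ≤ (ℝ ∙ b k)ᗮ := by
    rw [span_le]
    rintro _ ⟨l, hl, rfl⟩
    rw [SetLike.mem_coe, mem_orthogonal_singleton_iff_inner_right]
    exact b.orthonormal.2 (by rintro rfl; exact hk hl)
  exact (mem_orthogonal_singleton_iff_inner_right).1 (this hv)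

theorem finrank_span_image (s : Finset ι) : finrank ℝ (span ℝ (b '' s)) = #s := by
  rw [Set.image_eq_range, finrank_span_eq_card (b := fun k : (s : Set ι) => b k)
    (b.orthonormal.linearIndependent.comp _ Subtype.val_injective)]
  simp

theorem mul_norm_sq_le_inner_apply_of_mem_span (hb : ∀ k, T (b k) = e k • b k)
    (hs : ∀ k ∈ s, t ≤ e k) (hv : v ∈ span ℝ (b '' s)) : t * ‖v‖ ^ 2 ≤ ⟪v, T v⟫ := by
  rw [← b.sum_sq_inner_right v, mul_sum, inner_apply_eq_sum_eigenvalue_mul_sq hb]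
  refine sum_le_sum fun k _ => ?_
  by_cases hk : k ∈ s
  · exact mul_le_mul_of_nonneg_right (hs k hk) (sq_nonneg _)
  · simp [inner_eq_zero_of_mem_span_image hv hk]

theorem inner_apply_le_mul_norm_sq_of_mem_span (hb : ∀ k, T (b k) = e k • b k)
    (hs : ∀ k ∈ s, e k ≤ t) (hv : v ∈ span ℝ (b '' s)) : ⟪v, T v⟫ ≤ t * ‖v‖ ^ 2 := by
  rw [← b.sum_sq_inner_right v, mul_sum, inner_apply_eq_sum_eigenvalue_mul_sq hb]
  refine sum_le_sum fun k _ => ?_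
  by_cases hk : k ∈ s
  · exact mul_le_mul_of_nonneg_right (hs k hk) (sq_nonneg _)
  · simp [inner_eq_zero_of_mem_span_image hv hk]

section Comparison

variable {ι' : Type*} [Fintype ι'] {P Q : E →ₗ[ℝ] E} {bP : OrthonormalBasis ι ℝ E}
  {bQ : OrthonormalBasis ι' ℝ E} {eP : ι → ℝ} {eQ : ι' → ℝ}

theorem le_of_inner_apply_le_on_of_lt_card (hP : ∀ k, P (bP k) = eP k • bP k)
    (hQ : ∀ k, Q (bQ k) = eQ k • bQ k) {W : Submodule ℝ E}
    (hPQ : ∀ v ∈ W, ⟪v, P v⟫ ≤ ⟪v, Q v⟫) {r : ℝ}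
    (hcard : 2 * finrank ℝ E < #{k | r ≤ eP k} + #{k | eQ k ≤ t} + finrank ℝ W) :
    r ≤ t := by
  have := Module.Finite.of_basis bP.toBasis
  set VP := span ℝ (bP '' ↑({k | r ≤ eP k} : Finset ι))
  set VQ := span ℝ (bQ '' ↑({k | eQ k ≤ t} : Finset ι'))
  have hPQW := finrank_add_finrank_le_finrank_add_finrank_inf (VP ⊓ VQ) W
  have hPQ' := finrank_add_finrank_le_finrank_add_finrank_inf VP VQ
  rw [finrank_span_image, finrank_span_image] at hPQ'
  obtain ⟨v, ⟨⟨hvP, hvQ⟩, hvW⟩, hv0⟩ := exists_mem_ne_zero_of_ne_bot (p := VP ⊓ VQ ⊓ W)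
    (fun h => by rw [h, finrank_bot] at hPQW; omega)
  have hsP := mul_norm_sq_le_inner_apply_of_mem_span hP (fun k hk => (mem_filter.1 hk).2) hvP
  have hQt := inner_apply_le_mul_norm_sq_of_mem_span hQ (fun k hk => (mem_filter.1 hk).2) hvQ
  have hv : 0 < ‖v‖ ^ 2 := by positivity
  exact le_of_mul_le_mul_right ((hsP.trans (hPQ v hvW)).trans hQt) hv

variable {n : ℕ} {μ ν : Fin n → ℝ}

theorem le_of_inner_apply_le_of_antitone (hP : ∀ k, P (bP k) = eP k • bP k)
    (hQ : ∀ k, Q (bQ k) = eQ k • bQ k) (hE : finrank ℝ E = n)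
    (hμ : Antitone μ) (hμP : univ.val.map μ = univ.val.map eP)
    (hν : Antitone ν) (hνQ : univ.val.map ν = univ.val.map eQ)
    (hPQ : ∀ v, ⟪v, P v⟫ ≤ ⟪v, Q v⟫) (m : Fin n) : μ m ≤ ν m := by
  refine le_of_inner_apply_le_on_of_lt_card hP hQ (W := ⊤) (fun v _ => hPQ v) ?_
  have := le_card_filter_le_of_antitone hμ hμP m
  have := le_card_filter_ge_of_antitone hν hνQ m
  rw [finrank_top]
  omega

/-- The rank-one half of Weyl's interlacing: `P` and `Q` agree on the hyperplane `uᗮ`. -/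
theorem le_of_inner_apply_eq_add_sq_of_antitone (hP : ∀ k, P (bP k) = eP k • bP k)
    (hQ : ∀ k, Q (bQ k) = eQ k • bQ k) (hE : finrank ℝ E = n)
    (hμ : Antitone μ) (hμP : univ.val.map μ = univ.val.map eP)
    (hν : Antitone ν) (hνQ : univ.val.map ν = univ.val.map eQ) {u : E} {c : ℝ}
    (hPQ : ∀ v, ⟪v, P v⟫ = ⟪v, Q v⟫ + c * ⟪u, v⟫ ^ 2) {p q : Fin n} (hpq : p < q) :
    μ q ≤ ν p := by
  have := Module.Finite.of_basis bP.toBasis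
  refine le_of_inner_apply_le_on_of_lt_card hP hQ (W := (ℝ ∙ u)ᗮ) (fun v hv => ?_) ?_
  · rw [hPQ, mem_orthogonal_singleton_iff_inner_right.1 hv]
    simp
  have := finrank_add_finrank_orthogonal (ℝ ∙ u)
  have : finrank ℝ (ℝ ∙ u) ≤ 1 := by simpa using finrank_span_le_card (R := ℝ) {u}
  have := le_card_filter_le_of_antitone hμ hμP q
  have := le_card_filter_ge_of_antitone hν hνQ p
  have : (p : ℕ) < q := hpq
  omega

end Comparison

theorem LinearMap.IsSymmetric.sum_sq_eigenvalue_eq_sum_sq_norm_apply {ι' : Type*} [Fintype ι']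
    (hT : T.IsSymmetric) (hb : ∀ k, T (b k) = e k • b k) (b' : OrthonormalBasis ι' ℝ E) :
    ∑ k, e k ^ 2 = ∑ a, ‖T (b' a)‖ ^ 2 :=
  calc ∑ k, e k ^ 2 = ∑ k, ‖T (b k)‖ ^ 2 := by
        simp_rw [hb, norm_smul, b.orthonormal.1, mul_one, Real.norm_eq_abs, sq_abs]
    _ = ∑ k, ∑ a, ⟪T (b' a), b k⟫ ^ 2 := by simp_rw [← b'.sum_sq_inner_right, hT _ _]
    _ = ∑ a, ‖T (b' a)‖ ^ 2 := by rw [sum_comm]; simp_rw [b.sum_sq_inner_left]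

end Eigenbasis

section Matrix

variable {ι : Type*} [Fintype ι]

theorem Matrix.IsHermitian.toEuclideanLin_eigenvectorBasis [DecidableEq ι] {A : Matrix ι ι ℝ}
    (hA : A.IsHermitian) (k : ι) :
    toEuclideanLin A (hA.eigenvectorBasis k) = hA.eigenvalues k • hA.eigenvectorBasis k := by
  apply WithLp.ofLp_injective
  simpa using hA.mulVec_eigenvectorBasis k

theorem Matrix.IsHermitian.sum_sq_eigenvalue_eq_sum_sq_apply [DecidableEq ι] {M : Matrix ι ι ℝ}
    (hM : M.IsHermitian) {b : OrthonormalBasis ι ℝ (EuclideanSpace ℝ ι)} {e : ι → ℝ}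
    (hb : ∀ k, toEuclideanLin M (b k) = e k • b k) :
    ∑ k, e k ^ 2 = ∑ a, ∑ c, M c a ^ 2 := by
  rw [(isSymmetric_toEuclideanLin_iff.mpr hM).sum_sq_eigenvalue_eq_sum_sq_norm_apply hb
    (EuclideanSpace.basisFun ι ℝ)]
  simp [EuclideanSpace.real_norm_sq_eq, mulVec, dotProduct, Pi.single_apply]

theorem inner_toEuclideanLin_of_const [DecidableEq ι] (c : ℝ) (v : EuclideanSpace ℝ ι) :
    ⟪v, toEuclideanLin (of fun _ _ => c : Matrix ι ι ℝ) v⟫ =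
      c * ⟪WithLp.toLp 2 fun _ => 1, v⟫ ^ 2 := by
  simp [PiLp.inner_apply, mulVec, dotProduct, ← mul_sum]
  ring

theorem sum_sq_sub_half_of_zero_or_one {A : Matrix ι ι ℝ} (hA : ∀ a b, A a b = 0 ∨ A a b = 1) :
    ∑ a, ∑ c, (A - of fun _ _ => 1 / 2 : Matrix ι ι ℝ) c a ^ 2 =
      ((Fintype.card ι : ℝ) / 2) ^ 2 := by
  have hentry (a c : ι) : (A - of fun _ _ => 1 / 2 : Matrix ι ι ℝ) c a ^ 2 = 1 / 4 := by
    rcases hA c a with h | h <;> simp [h] <;> norm_num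
  simp only [hentry, sum_const, card_univ, nsmul_eq_mul]
  ring

end Matrix

/-- For integers `i ≥ 1`, `j ≥ 0` with `i + j + 1 ≤ n`, and a symmetric `n × n`
`(0,1)`-matrix `A` with eigenvalues `μ` listed in nonincreasing order,
`λ_{i+1}(A) - λ_{n-j}(A) ≤ (n/2) √((i+j+1)/(i(j+1)))`. -/
theorem spread_ij_upper_bound (n i j : ℕ) (hi : 1 ≤ i) (hn : i + j + 1 ≤ n)
    (A : Matrix (Fin n) (Fin n) ℝ) (hA : A.IsHermitian)
    (hA01 : ∀ a b, A a b = 0 ∨ A a b = 1)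
    (μ : Fin n → ℝ) (hmono : Antitone μ)
    (hperm : Finset.univ.val.map μ = Finset.univ.val.map hA.eigenvalues) :
    μ ⟨i, by omega⟩ - μ ⟨n - j - 1, by omega⟩ ≤
      ((n : ℝ) / 2) * Real.sqrt (((i : ℝ) + j + 1) / ((i : ℝ) * ((j : ℝ) + 1))) := by
  set M : Matrix (Fin n) (Fin n) ℝ := A - of fun _ _ => 1 / 2
  have hM : M.IsHermitian := hA.sub (by ext; simp)
  set hT := isSymmetric_toEuclideanLin_iff.mpr hM
  set ν := hT.eigenvalues finrank_euclideanSpace_fin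
  have hb (k : Fin n) : toEuclideanLin M (hT.eigenvectorBasis finrank_euclideanSpace_fin k) =
      ν k • hT.eigenvectorBasis finrank_euclideanSpace_fin k := by
    simp [ν, hT.apply_eigenvectorBasis]
  have hquad (v : EuclideanSpace ℝ (Fin n)) : ⟪v, toEuclideanLin A v⟫ =
      ⟪v, toEuclideanLin M v⟫ + 1 / 2 * ⟪WithLp.toLp 2 fun _ => 1, v⟫ ^ 2 := by
    rw [← inner_toEuclideanLin_of_const, ← inner_add_right, ← LinearMap.add_apply, ← map_add,
      sub_add_cancel]
  have hν : Antitone ν := hT.eigenvalues_antitone _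
  have hAM := le_of_inner_apply_eq_add_sq_of_antitone hA.toEuclideanLin_eigenvectorBasis hb
    finrank_euclideanSpace_fin hmono hperm hν rfl hquad (p := ⟨i - 1, by omega⟩)
    (q := ⟨i, by omega⟩) (by simp only [Fin.mk_lt_mk]; omega)
  have hMA := le_of_inner_apply_le_of_antitone hb hA.toEuclideanLin_eigenvectorBasis
    finrank_euclideanSpace_fin hν rfl hmono hperm
    (fun v => by rw [hquad]; exact le_add_of_nonneg_right (by positivity)) ⟨n - j - 1, by omega⟩
  have hsum : ∑ k, ν k ^ 2 = ((n : ℝ) / 2) ^ 2 := by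
    rw [hM.sum_sq_eigenvalue_eq_sum_sq_apply hb, sum_sq_sub_half_of_zero_or_one hA01,
      Fintype.card_fin]
  have hweighted := mul_sq_add_mul_sq_le_sum_sq_of_antitone hν (p := ⟨i - 1, by omega⟩)
    (q := ⟨n - j - 1, by omega⟩) (by simp only [Fin.mk_lt_mk]; omega)
  calc μ _ - μ _ ≤ max (ν ⟨i - 1, by omega⟩) 0 - min (ν ⟨n - j - 1, by omega⟩) 0 :=
        sub_le_sub (hAM.trans (le_max_left _ _)) ((min_le_left _ _).trans hMA)
    _ ≤ _ := by
      rw [add_assoc]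
      refine sub_le_mul_sqrt_of_mul_sq_add_mul_sq_le (Nat.cast_pos.2 hi) (by positivity)
        (by positivity) (hsum ▸ ?_)
      convert hweighted using 3 <;>
        push_cast [Nat.sub_sub, Nat.cast_sub hi, Nat.cast_sub (show j + 1 ≤ n by omega)] <;> ring
end

section
/- Let A be a symmetric n×n matrix with entries in {0,1}, with eigenvalues λ_1 ≥ λ_2 ≥ ⋯ ≥ λ_n. Then the sum of the squares of all eigenvalues except the largest satisfies λ_2² + λ_3² + ⋯ + λ_n² ≤ n²/4. -/
/-!
Since the entries of `A` are `0` or `1`, `∑ λᵢ² = tr A² = S`, the sum of all entries of `A`.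
Testing `A` against the all-ones vector gives `S ≤ n λ₁`, so
`λ₂² + ⋯ + λₙ² = S - λ₁² ≤ n λ₁ - λ₁² ≤ n² / 4`.
-/

open Finset Unitary
open scoped ComplexOrder

namespace Matrix

variable {n : Type*} [Fintype n]

theorem IsSymm.trace_mul_self_eq_sum {R : Type*} [CommSemiring R] {A : Matrix n n R}
    (hA : A.IsSymm) (hidem : ∀ i j, IsIdempotentElem (A i j)) :
    (A * A).trace = ∑ i, ∑ j, A i j := by
  simp only [trace, diag_apply, mul_apply, hA.apply, (hidem _ _).eq]

variable [DecidableEq n] {𝕜 : Type*} [RCLike 𝕜] {A : Matrix n n 𝕜}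

theorem IsHermitian.trace_mul_self (hA : A.IsHermitian) :
    (A * A).trace = ∑ i, (hA.eigenvalues i : 𝕜) ^ 2 := by
  conv_lhs => rw [hA.spectral_theorem, ← map_mul, conjStarAlgAut_apply, trace_mul_cycle,
    Unitary.coe_star_mul_self, one_mul, diagonal_mul_diagonal, trace_diagonal]
  simp [sq]

theorem IsHermitian.posSemidef_smul_one_sub (hA : A.IsHermitian) {c : ℝ}
    (hc : ∀ i, hA.eigenvalues i ≤ c) : ((c : 𝕜) • 1 - A).PosSemidef := by
  have hconj : (c : 𝕜) • 1 - A = conjStarAlgAut 𝕜 _ hA.eigenvectorUnitary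
      (diagonal fun i ↦ ((c - hA.eigenvalues i : ℝ) : 𝕜)) := by
    conv_lhs => rw [hA.spectral_theorem]
    rw [← map_one (conjStarAlgAut 𝕜 _ hA.eigenvectorUnitary), ← map_smul, ← map_sub]
    congr 1
    ext i j
    by_cases h : i = j <;> simp [h, sub_smul, Algebra.algebraMap_eq_smul_one]
  rw [hconj, conjStarAlgAut_apply, star_eq_conjTranspose]
  exact (PosSemidef.diagonal fun i ↦ by simpa using hc i).mul_mul_conjTranspose_same _

theorem IsHermitian.sum_sum_le_mul_card {A : Matrix n n ℝ} (hA : A.IsHermitian) {c : ℝ}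
    (hc : ∀ i, hA.eigenvalues i ≤ c) : ∑ i, ∑ j, A i j ≤ c * Fintype.card n := by
  have := (hA.posSemidef_smul_one_sub hc).dotProduct_mulVec_nonneg 1
  simp only [star_trivial, sub_mulVec, smul_mulVec, one_mulVec, dotProduct_sub, dotProduct_smul,
    one_dotProduct, mulVec, dotProduct_one] at this
  simpa [mul_comm] using this

end Matrix

theorem Multiset.sum_map_comp_eq_of_map_univ_eq {ι κ α M : Type*} [Fintype ι] [Fintype κ]
    [AddCommMonoid M] {μ : ι → α} {ν : κ → α} (h : univ.val.map μ = univ.val.map ν)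
    (f : α → M) : ∑ i, f (μ i) = ∑ j, f (ν j) := by
  simpa only [Multiset.map_map, Function.comp_def, Finset.sum_map_val] using
    congrArg (fun m ↦ (m.map f).sum) h

theorem Antitone.le_apply_zero_of_map_univ_val_eq {α : Type*} [Preorder α] {n : ℕ}
    {μ ν : Fin n → α} (hμ : Antitone μ) (h : univ.val.map μ = univ.val.map ν) (hn : 0 < n)
    (i : Fin n) : ν i ≤ μ ⟨0, hn⟩ := by
  obtain ⟨k, -, hk⟩ := Multiset.mem_map.1 (h ▸ Multiset.mem_map_of_mem ν (mem_univ i))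
  exact hk ▸ hμ (Nat.zero_le _)

/-- For a symmetric `n × n` `(0,1)`-matrix `A` with eigenvalues `μ` in
nonincreasing order, the sum of the squares of all eigenvalues except the largest satisfies
`λ_2² + ⋯ + λ_n² ≤ n²/4`. -/
theorem sum_sq_eigenvalues_except_top (n : ℕ) (hn : 0 < n)
    (A : Matrix (Fin n) (Fin n) ℝ) (hA : A.IsHermitian)
    (hA01 : ∀ a b, A a b = 0 ∨ A a b = 1)
    (μ : Fin n → ℝ) (hmono : Antitone μ)
    (hperm : Finset.univ.val.map μ = Finset.univ.val.map hA.eigenvalues) :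
    ∑ k ∈ Finset.univ.erase (⟨0, hn⟩ : Fin n), μ k ^ 2 ≤ (n : ℝ) ^ 2 / 4 := by
  have hsymm : A.IsSymm := by simpa using hA
  have hidem (i j : Fin n) : IsIdempotentElem (A i j) := by
    rcases hA01 i j with h | h <;> simp [h, IsIdempotentElem]
  have hsum : ∑ k, μ k ^ 2 = ∑ i, ∑ j, A i j := by
    rw [Multiset.sum_map_comp_eq_of_map_univ_eq hperm (· ^ 2), ← hsymm.trace_mul_self_eq_sum hidem,
      hA.trace_mul_self]
    simp only [RCLike.ofReal_real_eq_id, id]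
  have hS := hA.sum_sum_le_mul_card (hmono.le_apply_zero_of_map_univ_val_eq hperm hn)
  rw [Fintype.card_fin] at hS
  rw [sum_erase_eq_sub (mem_univ _), hsum]
  nlinarith [sq_nonneg (μ ⟨0, hn⟩ - n / 2)]
end

section
/- Let A be a symmetric n×n matrix with entries in {0,1}, with eigenvalues λ_1 ≥ λ_2 ≥ ⋯ ≥ λ_n, and let z > 1 be a real number. Then λ_1² + z·(λ_2² + λ_3² + ⋯ + λ_n²) ≤ z²·n²/(4(z−1)). -/
open Matrix


/-- For a symmetric `n × n` `(0,1)`-matrix `A` with eigenvalues `μ` in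
nonincreasing order, and any real `z > 1`,
`λ_1² + z (λ_2² + ⋯ + λ_n²) ≤ z² n² / (4(z-1))`. -/
theorem weighted_sum_sq_eigenvalues (n : ℕ) (hn : 0 < n)
    (A : Matrix (Fin n) (Fin n) ℝ) (hA : A.IsHermitian)
    (hA01 : ∀ a b, A a b = 0 ∨ A a b = 1)
    (μ : Fin n → ℝ) (hmono : Antitone μ)
    (hperm : Finset.univ.val.map μ = Finset.univ.val.map hA.eigenvalues)
    (z : ℝ) (hz : 1 < z) :
    μ ⟨0, hn⟩ ^ 2 + z * ∑ k ∈ Finset.univ.erase (⟨0, hn⟩ : Fin n), μ k ^ 2 ≤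
      z ^ 2 * (n : ℝ) ^ 2 / (4 * (z - 1)) := by
  classical
  set U : Matrix (Fin n) (Fin n) ℝ := (hA.eigenvectorUnitary : Matrix (Fin n) (Fin n) ℝ) with hU
  set D : Matrix (Fin n) (Fin n) ℝ := Matrix.diagonal hA.eigenvalues with hD
  have hspec : A = U * D * star U := by
    have h := hA.spectral_theorem
    simpa [hU, hD] using h
  have hUstar : star U * U = 1 := Unitary.coe_star_mul_self hA.eigenvectorUnitary
  have hUstar' : U * star U = 1 := Unitary.coe_mul_star_self hA.eigenvectorUnitary
  set μ0 : ℝ := μ ⟨0, hn⟩ with hμ0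
  have hsymm : ∀ i j, A j i = A i j := by
    intro i j
    have := congrFun (congrFun hA i) j
    simpa [Matrix.conjTranspose_apply] using this
  set s : ℝ := ∑ i, ∑ j, A i j with hs
  have hs_nonneg : 0 ≤ s := by
    apply Finset.sum_nonneg; intro i _; apply Finset.sum_nonneg; intro j _
    rcases hA01 i j with h | h <;> simp [h]
  -- trace A*A = sum of eigenvalues squared = s
  have hAA : A * A = U * (D * D) * star U := by
    rw [hspec]
    simp only [Matrix.mul_assoc]
    rw [← Matrix.mul_assoc (star U) U (D * star U), hUstar, Matrix.one_mul]
  have htr1 : (A * A).trace = ∑ i, hA.eigenvalues i ^ 2 := by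
    rw [hAA, Matrix.trace_mul_cycle, ← Matrix.mul_assoc, hUstar, Matrix.one_mul]
    simp [hD, Matrix.diagonal_mul_diagonal, Matrix.trace_diagonal, sq]
  have htr2 : (A * A).trace = s := by
    rw [Matrix.trace]
    simp only [Matrix.diag_apply, Matrix.mul_apply]
    rw [hs]
    congr 1; ext i; congr 1; ext j
    rw [hsymm i j]
    rcases hA01 i j with h | h <;> simp [h]
  have hsum_eig : ∑ i, hA.eigenvalues i ^ 2 = s := by rw [← htr1, htr2]
  have hsum_μ : ∑ k, μ k ^ 2 = s := by
    have : ∑ k, μ k ^ 2 = ∑ i, hA.eigenvalues i ^ 2 := by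
      have h1 : ∑ k, μ k ^ 2 = ((Finset.univ.val.map μ).map (fun x => x ^ 2)).sum := by
        rw [Multiset.map_map]; rfl
      have h2 : ∑ i, hA.eigenvalues i ^ 2
          = ((Finset.univ.val.map hA.eigenvalues).map (fun x => x ^ 2)).sum := by
        rw [Multiset.map_map]; rfl
      rw [h1, h2, hperm]
    rw [this, hsum_eig]
  have heig_le : ∀ i, hA.eigenvalues i ≤ μ0 := by
    intro i
    have hmem : hA.eigenvalues i ∈ Finset.univ.val.map μ := by
      rw [hperm]; exact Multiset.mem_map_of_mem _ (Finset.mem_univ_val i)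
    obtain ⟨j, _, hj⟩ := Multiset.mem_map.mp hmem
    rw [← hj]
    exact hmono (show (⟨0, hn⟩ : Fin n) ≤ j from by simp [Fin.le_def])
  -- Rayleigh: s ≤ μ0 * n
  have hray : s ≤ μ0 * n := by
    set v : Fin n → ℝ := fun _ => 1 with hv
    set w : Fin n → ℝ := Matrix.mulVec (star U) v with hw
    have hstarT : star U = U.transpose := by
      ext i j; simp [Matrix.star_apply]
    have hvAv : v ⬝ᵥ (A *ᵥ v) = s := by
      simp [hv, dotProduct, Matrix.mulVec, hs]
    have e1 : (U * D * star U) *ᵥ v = U *ᵥ (D *ᵥ w) := by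
      rw [hw, Matrix.mulVec_mulVec, Matrix.mulVec_mulVec, Matrix.mul_assoc]
    have e2 : v ⬝ᵥ (U *ᵥ (D *ᵥ w)) = (v ᵥ* U) ⬝ᵥ (D *ᵥ w) := Matrix.dotProduct_mulVec _ _ _
    have e3 : v ᵥ* U = w := by rw [hw, hstarT, Matrix.mulVec_transpose]
    have e4 : w ⬝ᵥ (D *ᵥ w) = ∑ i, hA.eigenvalues i * w i ^ 2 := by
      simp only [hD, dotProduct, Matrix.mulVec_diagonal]
      exact Finset.sum_congr rfl fun i _ => by ring
    have hvAv2 : v ⬝ᵥ (A *ᵥ v) = ∑ i, hA.eigenvalues i * w i ^ 2 := by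
      have key : v ⬝ᵥ ((U * D * star U) *ᵥ v) = ∑ i, hA.eigenvalues i * w i ^ 2 := by
        rw [e1, e2, e3, e4]
      rw [← hspec] at key
      exact key
    have hww : ∑ i, w i ^ 2 = (n : ℝ) := by
      have hUw : U *ᵥ w = v := by
        rw [hw, Matrix.mulVec_mulVec, hUstar', Matrix.one_mulVec]
      have h1 : w ⬝ᵥ w = v ⬝ᵥ v := by
        have e : w ⬝ᵥ (U.transpose *ᵥ v) = v ⬝ᵥ v := by
          rw [Matrix.dotProduct_mulVec, Matrix.vecMul_transpose, hUw]
        rw [← e, ← hstarT, ← hw]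
      have h2 : w ⬝ᵥ w = ∑ i, w i ^ 2 := by simp [dotProduct, sq]
      have h3 : v ⬝ᵥ v = (n : ℝ) := by simp [hv, dotProduct]
      rw [← h2, h1, h3]
    calc s = ∑ i, hA.eigenvalues i * w i ^ 2 := by rw [← hvAv, hvAv2]
      _ ≤ ∑ i, μ0 * w i ^ 2 := by
          apply Finset.sum_le_sum; intro i _
          exact mul_le_mul_of_nonneg_right (heig_le i) (sq_nonneg _)
      _ = μ0 * n := by rw [← Finset.mul_sum, hww]
  have hμ0sq : μ0 ^ 2 ≤ s := by
    rw [← hsum_μ]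
    exact Finset.single_le_sum (fun i _ => sq_nonneg (μ i)) (Finset.mem_univ _)
  have hnpos : (0:ℝ) < n := Nat.cast_pos.mpr hn
  have hμ0_nonneg : 0 ≤ μ0 := by nlinarith [sq_nonneg μ0]
  have hsplit : μ0 ^ 2 + ∑ k ∈ Finset.univ.erase (⟨0, hn⟩ : Fin n), μ k ^ 2 = s := by
    rw [← hsum_μ]
    exact Finset.add_sum_erase Finset.univ (fun k => μ k ^ 2) (Finset.mem_univ (⟨0, hn⟩ : Fin n))
  have hz1 : (0:ℝ) < z - 1 := by linarith
  rw [le_div_iff₀ (by positivity : (0:ℝ) < 4 * (z - 1))]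
  nlinarith [sq_nonneg (2 * (z - 1) * μ0 - z * (n:ℝ)), hsplit, hray, hs_nonneg,
    hμ0_nonneg, mul_le_mul_of_nonneg_left hray (by positivity : (0:ℝ) ≤ 4 * z * (z - 1)),
    sq_nonneg μ0]
end

section
/- Let A be a symmetric n×n matrix with entries in {0,1} with n ≥ 2, and eigenvalues λ_1 ≥ ⋯ ≥ λ_n. Then λ_2(A) − λ_n(A) ≤ n/√2. -/
/-!
Let `m` be the number of ones in `A`. Since the entries are `0` or `1` and `A` is symmetric,
`m = tr (A²) = ∑ λᵢ²`, while the Rayleigh quotient of the all-ones vector gives `λ₁ ≥ m / n`.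
Hence `λ₂² + λₙ² ≤ m - m² / n² ≤ n² / 4`, and `(λ₂ - λₙ)² ≤ 2 (λ₂² + λₙ²) ≤ n² / 2`.
-/

open Matrix Finset

namespace Matrix

variable {n : Type*} [Fintype n]

lemma IsHermitian.trace_mul_self_eq_sum_eigenvalues_sq {𝕜 : Type*} [RCLike 𝕜] [DecidableEq n]
    {A : Matrix n n 𝕜} (hA : A.IsHermitian) : (A * A).trace = ∑ i, (hA.eigenvalues i : 𝕜) ^ 2 := by
  conv_lhs => rw [hA.spectral_theorem, ← map_mul, Unitary.conjStarAlgAut_apply, trace_mul_cycle,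
    Unitary.coe_star_mul_self, one_mul, diagonal_mul_diagonal, trace_diagonal]
  simp [sq]

open scoped MatrixOrder in
lemma IsHermitian.dotProduct_mulVec_le_of_eigenvalues_le [DecidableEq n] {A : Matrix n n ℝ}
    (hA : A.IsHermitian) {c : ℝ} (hc : ∀ i, hA.eigenvalues i ≤ c) (x : n → ℝ) :
    x ⬝ᵥ A *ᵥ x ≤ c * (x ⬝ᵥ x) := by
  have hle : A ≤ algebraMap ℝ _ c := le_algebraMap_of_spectrum_le (by
    rw [hA.spectrum_real_eq_range_eigenvalues]
    rintro _ ⟨i, rfl⟩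
    exact hc i) hA
  have := (le_iff.mp hle).dotProduct_mulVec_nonneg x
  rw [Algebra.algebraMap_eq_smul_one, sub_mulVec, smul_mulVec, one_mulVec, dotProduct_sub,
    dotProduct_smul, smul_eq_mul, star_trivial] at this
  linarith

lemma IsSymm.trace_mul_self_of_zero_or_one {R : Type*} [CommSemiring R] {A : Matrix n n R}
    (hA : A.IsSymm) (h01 : ∀ i j, A i j = 0 ∨ A i j = 1) : (A * A).trace = ∑ i, ∑ j, A i j := by
  refine sum_congr rfl fun i _ => sum_congr rfl fun j _ => ?_
  change A i j * A j i = A i j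
  rw [hA.apply i j]
  rcases h01 i j with h | h <;> simp [h]

end Matrix

lemma sub_le_div_sqrt_two_of_sq_add_sq_add_sq_le {a b c m N : ℝ} (hN : 0 < N) (ha : m ≤ a * N)
    (habc : a ^ 2 + b ^ 2 + c ^ 2 ≤ m) : b - c ≤ N / √2 := by
  have hm : 0 ≤ m := by nlinarith
  -- `m - m² / N²` is maximal at `m = N² / 2`
  have hbc : b ^ 2 + c ^ 2 ≤ N ^ 2 / 4 := by
    have hm2 : m ^ 2 ≤ (a * N) ^ 2 := pow_le_pow_left₀ hm ha 2
    have : N ^ 2 * (b ^ 2 + c ^ 2) ≤ N ^ 2 * (N ^ 2 / 4) := by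
      nlinarith [sq_nonneg (2 * m - N ^ 2), mul_le_mul_of_nonneg_left habc (sq_nonneg N)]
    exact le_of_mul_le_mul_left this (by positivity)
  rw [le_div_iff₀ (by positivity)]
  have hsq : ((b - c) * √2) ^ 2 ≤ N ^ 2 := by
    rw [mul_pow, Real.sq_sqrt zero_le_two]
    nlinarith [sq_nonneg (b + c)]
  exact le_of_sq_le_sq hsq hN.le

lemma sum_comp_eq_of_map_univ_eq {ι κ α M : Type*} [Fintype ι] [Fintype κ] [AddCommMonoid M]
    {f : ι → α} {g : κ → α} (h : univ.val.map f = univ.val.map g) (φ : α → M) :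
    ∑ i, φ (f i) = ∑ k, φ (g k) := by
  have := congrArg (fun s => (s.map φ).sum) h
  simp only [Multiset.map_map, Function.comp_def] at this
  exact this

lemma Antitone.le_of_map_univ_eq {ι κ α : Type*} [Fintype ι] [Fintype κ] [Preorder ι]
    [Preorder α] {f : ι → α} {g : κ → α} (hf : Antitone f) (h : univ.val.map f = univ.val.map g)
    {i₀ : ι} (hi₀ : IsBot i₀) (k : κ) : g k ≤ f i₀ := by
  obtain ⟨i, -, hi⟩ := Multiset.mem_map.mp (h ▸ Multiset.mem_map_of_mem g (mem_univ_val k))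
  exact hi ▸ hf (hi₀ i)

lemma sq_add_sq_add_sq_le_sum_sq {ι : Type*} [Fintype ι] [DecidableEq ι] (f : ι → ℝ) {i j k : ι}
    (hij : i ≠ j) (hik : i ≠ k) (hjk : j ≠ k) : f i ^ 2 + f j ^ 2 + f k ^ 2 ≤ ∑ l, f l ^ 2 := by
  calc f i ^ 2 + f j ^ 2 + f k ^ 2 = ∑ l ∈ {i, j, k}, f l ^ 2 := by
        rw [sum_insert (by simp [hij, hik]), sum_pair hjk, add_assoc]
    _ ≤ ∑ l, f l ^ 2 := sum_le_univ_sum_of_nonneg fun l => sq_nonneg (f l)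

/-- For a symmetric `n × n` `(0,1)`-matrix `A` with `n ≥ 2` and eigenvalues `μ`
in nonincreasing order, `λ_2(A) - λ_n(A) ≤ n / √2`. -/
theorem spread_10_upper_bound (n : ℕ) (hn : 2 ≤ n)
    (A : Matrix (Fin n) (Fin n) ℝ) (hA : A.IsHermitian)
    (hA01 : ∀ a b, A a b = 0 ∨ A a b = 1)
    (μ : Fin n → ℝ) (hmono : Antitone μ)
    (hperm : Finset.univ.val.map μ = Finset.univ.val.map hA.eigenvalues) :
    μ ⟨1, by omega⟩ - μ ⟨n - 1, by omega⟩ ≤ (n : ℝ) / Real.sqrt 2 := by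
  obtain rfl | hn3 := hn.eq_or_lt
  · simp only [Nat.add_one_sub_one, sub_self]
    positivity
  set m := ∑ i, ∑ j, A i j
  have hsum : ∑ i, μ i ^ 2 = m := by
    have := (isHermitian_iff_isSymm.mp hA).trace_mul_self_of_zero_or_one hA01
    rw [hA.trace_mul_self_eq_sum_eigenvalues_sq] at this
    simpa [sum_comp_eq_of_map_univ_eq hperm (· ^ 2)] using this
  have hmax : m ≤ μ ⟨0, by omega⟩ * n := by
    have := hA.dotProduct_mulVec_le_of_eigenvalues_le
      (hmono.le_of_map_univ_eq hperm (i₀ := ⟨0, by omega⟩) fun i => Nat.zero_le i) 1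
    simpa [m, one_dotProduct, mulVec, dotProduct] using this
  refine sub_le_div_sqrt_two_of_sq_add_sq_add_sq_le (by positivity) hmax (hsum ▸ ?_)
  exact sq_add_sq_add_sq_le_sum_sq μ (by simp [Fin.ext_iff]) (by simp [Fin.ext_iff]; omega)
    (by simp [Fin.ext_iff]; omega)
end

section
/- Let t ≥ 1 and let A be the adjacency matrix of the t-blowup of the closed path P_4*, i.e., A = P ⊗ J_t where P = [[1,1,0,0],[1,0,1,0],[0,1,0,1],[0,0,1,1]] and J_t is the t×t all-ones matrix. Then A is a symmetric 4t×4t matrix with entries in {0,1} whose eigenvalues are 2t, √2·t, 0 with multiplicity 4t−3, and −√2·t; in particular, with n = 4t, λ_2(A) − λ_n(A) = 2√2·t = n/√2. -/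
/-!
The blowup factors as `P ⊗ J_t = B C`, where `B` repeats each row of `P` and `C` each column of
`I₄` `t` times, and `C B = t P`. Sylvester's identity `X^4 χ(B C) = X^(4t) χ(C B)` then gives
`χ(P ⊗ J_t) = X^(4t-3) (X - 2t)(X² - 2t²)`, since `χ(P) = X (X - 2)(X² - 2)`. Sorting this
spectrum, `λ₂ = √2 t` and `λ_(4t) = -√2 t`.
-/

open Kronecker Matrix Polynomial

namespace Matrix

variable {R : Type*} [CommRing R] {n ι : Type*} [Fintype n] [DecidableEq n]

theorem kronecker_ones_eq_mul (M : Matrix n n R) :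
    M ⊗ₖ of (fun _ _ : ι => (1 : R)) =
      M.submatrix Prod.fst id * (1 : Matrix n n R).submatrix id (Prod.fst : n × ι → n) := by
  ext p q
  simp [mul_apply, one_apply]

theorem X_pow_mul_charpoly_kronecker_ones [Fintype ι] [DecidableEq ι] (M : Matrix n n R) :
    X ^ Fintype.card n * (M ⊗ₖ of fun _ _ : ι => (1 : R)).charpoly =
      X ^ (Fintype.card n * Fintype.card ι) * ((Fintype.card ι : R) • M).charpoly := by
  rw [kronecker_ones_eq_mul, charpoly_mul_comm', Fintype.card_prod]
  congr 2
  ext i j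
  simp [mul_apply, Fintype.sum_prod_type, one_apply]

end Matrix

def closedP4Adj : Matrix (Fin 4) (Fin 4) ℝ := !![1, 1, 0, 0; 1, 0, 1, 0; 0, 1, 0, 1; 0, 0, 1, 1]

theorem charpoly_smul_closedP4Adj (c : ℝ) :
    (c • closedP4Adj).charpoly =
      X * (X - C (2 * c)) * (X - C (√2 * c)) * (X - C (-(√2 * c))) := by
  have hsqrt2 : √2 ^ 2 = 2 := Real.sq_sqrt zero_le_two
  refine Polynomial.funext fun x => ?_
  simp [eval_charpoly, det_succ_row_zero, Fin.sum_univ_succ, closedP4Adj, Fin.succAbove]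
  linear_combination (x ^ 2 * c ^ 2 - 2 * x * c ^ 3) * hsqrt2

theorem charpoly_closedP4Adj_kronecker_ones (t : ℕ) (ht : 1 ≤ t) :
    (closedP4Adj ⊗ₖ of fun _ _ : Fin t => (1 : ℝ)).charpoly =
      (((2 * (t : ℝ)) ::ₘ (√2 * t) ::ₘ (Multiset.replicate (4 * t - 3) 0 + {-(√2 * t)})).map
        fun a => X - C a).prod := by
  have h := X_pow_mul_charpoly_kronecker_ones (ι := Fin t) closedP4Adj
  rw [charpoly_smul_closedP4Adj] at h
  obtain ⟨k, rfl⟩ : ∃ k, t = k + 1 := ⟨t - 1, by omega⟩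
  apply mul_left_cancel₀ (pow_ne_zero 4 (X_ne_zero : (X : ℝ[X]) ≠ 0))
  simp only [Fintype.card_fin] at h
  rw [h, show 4 * (k + 1) - 3 = 4 * k + 1 by omega]
  simp only [Multiset.map_cons, Multiset.map_add, Multiset.map_replicate, Multiset.map_singleton,
    Multiset.prod_cons, Multiset.prod_add, Multiset.prod_replicate, Multiset.prod_singleton,
    map_zero, sub_zero]
  ring

theorem eigenvalues_closedP4Adj_kronecker_ones (t : ℕ) (ht : 1 ≤ t)
    (hA : (closedP4Adj ⊗ₖ of fun _ _ : Fin t => (1 : ℝ)).IsHermitian) :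
    Finset.univ.val.map hA.eigenvalues =
      (2 * (t : ℝ)) ::ₘ (√2 * t) ::ₘ (Multiset.replicate (4 * t - 3) 0 + {-(√2 * t)}) := by
  have h := hA.roots_charpoly_eq_eigenvalues
  rw [charpoly_closedP4Adj_kronecker_ones t ht, roots_multiset_prod_X_sub_C] at h
  simpa using h.symm

noncomputable def closedP4BlowupEigenvalues (t : ℕ) : List ℝ :=
  2 * t :: √2 * t :: (List.replicate (4 * t - 3) 0 ++ [-(√2 * t)])

theorem sortedGE_closedP4BlowupEigenvalues (t : ℕ) : (closedP4BlowupEigenvalues t).SortedGE := by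
  have hsqrt : 0 ≤ √2 * t := by positivity
  have hsqrt_le : √2 * t ≤ 2 * t := by
    gcongr
    exact Real.sqrt_le_iff.mpr ⟨zero_le_two, by norm_num⟩
  simp only [closedP4BlowupEigenvalues, List.sortedGE_iff_pairwise, List.pairwise_cons,
    List.pairwise_append, List.pairwise_replicate, List.mem_cons, List.mem_append,
    List.mem_replicate]
  grind

theorem Antitone.ofFn_eq_of_map_univ_eq {α : Type*} [LinearOrder α] {n : ℕ} {μ : Fin n → α}
    (hμ : Antitone μ) {L : List α} (hL : L.SortedGE) (h : Finset.univ.val.map μ = L) :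
    List.ofFn μ = L :=
  (Multiset.coe_eq_coe.mp (by rwa [← Fin.univ_val_map])).eq_of_sortedGE hμ.sortedGE_ofFn hL

/-- The adjacency matrix `A = P ⊗ J_t` of the `t`-blowup of the closed path
`P₄*` (where `P = !![1,1,0,0; 1,0,1,0; 0,1,0,1; 0,0,1,1]`) is a symmetric `(0,1)`-matrix of
order `4t` with eigenvalues `2t`, `√2·t`, `0` with multiplicity `4t - 3`, and `-√2·t`; in
particular, with `n = 4t`, `λ_2(A) - λ_n(A) = 2√2·t = n/√2`. -/
theorem blowup_closed_P4_spectrum (t : ℕ) (ht : 1 ≤ t)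
    (A : Matrix (Fin 4 × Fin t) (Fin 4 × Fin t) ℝ)
    (hAdef : A = (!![1, 1, 0, 0; 1, 0, 1, 0; 0, 1, 0, 1; 0, 0, 1, 1] :
        Matrix (Fin 4) (Fin 4) ℝ) ⊗ₖ (Matrix.of fun (_ : Fin t) (_ : Fin t) => (1 : ℝ))) :
    A.IsSymm ∧ (∀ a b, A a b = 0 ∨ A a b = 1) ∧
    ∀ (hA : A.IsHermitian),
      (Finset.univ.val.map hA.eigenvalues =
        (2 * (t : ℝ)) ::ₘ (Real.sqrt 2 * (t : ℝ)) ::ₘ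
          (Multiset.replicate (4 * t - 3) (0 : ℝ) + {-(Real.sqrt 2 * (t : ℝ))})) ∧
      ∀ μ : Fin (4 * t) → ℝ, Antitone μ →
        Finset.univ.val.map μ = Finset.univ.val.map hA.eigenvalues →
        μ ⟨1, by omega⟩ - μ ⟨4 * t - 1, by omega⟩ = 2 * Real.sqrt 2 * (t : ℝ) ∧
        2 * Real.sqrt 2 * (t : ℝ) = ((4 * t : ℕ) : ℝ) / Real.sqrt 2 := by
  change A = closedP4Adj ⊗ₖ _ at hAdef
  subst hAdef
  refine ⟨?_, ?_, fun hA => ⟨eigenvalues_closedP4Adj_kronecker_ones t ht hA, fun μ hμ hmap => ?_⟩⟩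
  · ext ⟨a, s⟩ ⟨b, u⟩
    fin_cases a <;> fin_cases b <;> simp [closedP4Adj]
  · rintro ⟨a, s⟩ ⟨b, u⟩
    fin_cases a <;> fin_cases b <;> simp [closedP4Adj]
  have hμL : List.ofFn μ = closedP4BlowupEigenvalues t :=
    hμ.ofFn_eq_of_map_univ_eq (sortedGE_closedP4BlowupEigenvalues t)
    (by rw [hmap, eigenvalues_closedP4Adj_kronecker_ones t ht hA]; rfl)
  have hget (i : ℕ) (hi : i < 4 * t) :
      μ ⟨i, hi⟩ =
        (closedP4BlowupEigenvalues t)[i]'(by simp [closedP4BlowupEigenvalues]; omega) := by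
    rw [← List.getElem_of_eq hμL (by simpa using hi), List.getElem_ofFn]
  have hsecond : μ ⟨1, by omega⟩ = √2 * t := by simp [hget, closedP4BlowupEigenvalues]
  have hlast : μ ⟨4 * t - 1, by omega⟩ = -(√2 * t) := by
    rw [show (⟨4 * t - 1, _⟩ : Fin (4 * t)) = ⟨4 * t - 3 + 2, by omega⟩ from
      Fin.ext (by simp only; omega), hget]
    simp [closedP4BlowupEigenvalues]
  rw [hsecond, hlast]
  refine ⟨by ring, ?_⟩
  push_cast
  rw [show (4 * t : ℝ) = 2 * t * 2 by ring, mul_div_assoc, Real.div_sqrt]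
  ring
end

section
/- Let j ≥ 1 and let n = 2j+4. Let A = J_n − I_n + D, where D is a diagonal n×n (0,1)-matrix with exactly j+2 diagonal entries equal to 1 (the adjacency matrix of the complete graph K_{2j+4} with self-loops added on j+2 of its vertices). Then the multiset of eigenvalues of A is: ((2j+3) + √(4j²+16j+17))/2 with multiplicity 1, 0 with multiplicity j+1, −1 with multiplicity j+1, and ((2j+3) − √(4j²+16j+17))/2 with multiplicity 1. Consequently λ_1(A) − λ_{n−j}(A) = ((2j+5) + √(4j²+16j+17))/2. -/
/-!
For `x ∉ {0, -1}`, `x • 1 - A` is the invertible diagonal matrix `diagonal (x + 1 - D i i)` minus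
the all-ones matrix `J = 1 1ᵀ`, so the matrix determinant lemma gives
`det (x • 1 - A) = x ^ (j+2) (x+1) ^ (j+2) (1 - (j+2)/x - (j+2)/(x+1))`, that is
`χ_A = X ^ (j+1) (X+1) ^ (j+1) (X² - (2j+3) X - (j+2))`. The eigenvalues are the roots of `χ_A`.
Since `-1 ≤ r₋ ≤ 0 ≤ r₊` for the roots `r±` of the quadratic factor, sorted decreasingly they read
`r₊, 0, …, 0, r₋, -1, …, -1`, which puts `-1` at position `j + 3`.
-/

open Matrix Polynomial Finset

variable {n K : Type*} [Fintype n] [Field K]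

theorem det_diagonal_sub_allOnes [DecidableEq n] {e : n → K} (he : ∀ i, e i ≠ 0) :
    (diagonal e - of fun _ _ => (1 : K)).det = (∏ i, e i) * (1 - ∑ i, (e i)⁻¹) := by
  have hfactor : diagonal e - of (fun _ _ => (1 : K)) = diagonal e *
      (1 + replicateCol Unit (fun i => -(e i)⁻¹) * replicateRow Unit (fun _ => (1 : K))) := by
    ext i k
    rw [diagonal_mul]
    by_cases h : i = k <;>
      simp [h, one_apply, mul_add, mul_apply, mul_inv_cancel₀ (he _), sub_eq_add_neg]
  rw [hfactor, det_mul, det_diagonal, det_one_add_replicateCol_mul_replicateRow]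
  simp [dotProduct, sub_eq_add_neg]

section ZeroOne

variable [DecidableEq K] {d : n → K}

theorem filter_not_eq_zero_eq_filter_eq_one (hd : ∀ i, d i = 0 ∨ d i = 1) :
    univ.filter (fun i => ¬d i = 0) = univ.filter fun i => d i = 1 :=
  filter_congr fun i _ => by rcases hd i with h | h <;> simp [h]

theorem card_filter_eq_zero_add_card_filter_eq_one (hd : ∀ i, d i = 0 ∨ d i = 1) :
    #{i | d i = 0} + #{i | d i = 1} = Fintype.card n := by
  rw [← filter_not_eq_zero_eq_filter_eq_one hd, card_filter_add_card_filter_not, card_univ]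

theorem prod_comp_eq_pow_mul_pow {M : Type*} [CommMonoid M] (hd : ∀ i, d i = 0 ∨ d i = 1)
    (f : K → M) : ∏ i, f (d i) = f 0 ^ #{i | d i = 0} * f 1 ^ #{i | d i = 1} := by
  rw [← prod_filter_mul_prod_filter_not univ (fun i => d i = 0),
    filter_not_eq_zero_eq_filter_eq_one hd, prod_congr rfl fun i hi => by rw [(mem_filter.1 hi).2],
    prod_const, prod_congr rfl fun i hi => by rw [(mem_filter.1 hi).2], prod_const]

theorem sum_comp_eq_nsmul_add_nsmul {M : Type*} [AddCommMonoid M] (hd : ∀ i, d i = 0 ∨ d i = 1)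
    (f : K → M) : ∑ i, f (d i) = #{i | d i = 0} • f 0 + #{i | d i = 1} • f 1 := by
  rw [← sum_filter_add_sum_filter_not univ (fun i => d i = 0),
    filter_not_eq_zero_eq_filter_eq_one hd, sum_congr rfl fun i hi => by rw [(mem_filter.1 hi).2],
    sum_const, sum_congr rfl fun i hi => by rw [(mem_filter.1 hi).2], sum_const]

theorem charpoly_allOnes_sub_one_add_diagonal [DecidableEq n] [Infinite K]
    (hd : ∀ i, d i = 0 ∨ d i = 1) {a b : ℕ} (hn : Fintype.card n = a + b + 2)
    (h1 : #{i | d i = 1} = a + 1) :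
    (of (fun _ _ => (1 : K)) - 1 + diagonal d).charpoly =
      X ^ a * (X + 1) ^ b * (X ^ 2 - C (a + b + 1 : K) * X - C (a + 1 : K)) := by
  have h0 : #{i | d i = 0} = b + 1 := by
    have := card_filter_eq_zero_add_card_filter_eq_one hd
    omega
  refine eq_of_infinite_eval_eq _ _ (((Set.finite_singleton 0).insert (-1)).infinite_compl.mono ?_)
  intro x hx
  simp only [Set.mem_compl_iff, Set.mem_insert_iff, Set.mem_singleton_iff, not_or] at hx
  obtain ⟨hx_neg_one, hx0⟩ := hx
  have hx1 : x + 1 ≠ 0 := fun h => hx_neg_one (eq_neg_of_add_eq_zero_left h)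
  have he : ∀ i, x + 1 - d i ≠ 0 := fun i => by
    rcases hd i with h | h <;> simp [h, hx0, hx1]
  have hshift : scalar n x - (of (fun _ _ => (1 : K)) - 1 + diagonal d) =
      diagonal (fun i => x + 1 - d i) - of fun _ _ => 1 := by
    ext i k
    by_cases h : i = k <;> simp [h, add_sub_right_comm]
  simp only [Set.mem_ofPred_eq, eval_charpoly, hshift, det_diagonal_sub_allOnes he,
    prod_comp_eq_pow_mul_pow hd (fun t => x + 1 - t),
    sum_comp_eq_nsmul_add_nsmul hd (fun t => (x + 1 - t)⁻¹), h0, h1]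
  simp only [sub_zero, add_sub_cancel_right, nsmul_eq_mul, eval_mul, eval_pow, eval_add, eval_sub,
    eval_X, eval_C, eval_one]
  push_cast
  field_simp
  ring

end ZeroOne

theorem Matrix.IsHermitian.eigenvalues_eq_of_charpoly_eq {𝕜 : Type*} [RCLike 𝕜] [DecidableEq n]
    {A : Matrix n n 𝕜} (hA : A.IsHermitian) {m : Multiset ℝ}
    (h : A.charpoly = (m.map fun a : ℝ => X - C (a : 𝕜)).prod) :
    univ.val.map hA.eigenvalues = m := by
  have hroots := hA.roots_charpoly_eq_eigenvalues
  rw [h, show m.map (fun a : ℝ => X - C (a : 𝕜)) = (m.map RCLike.ofReal).map (X - C ·) by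
    simp only [Multiset.map_map, Function.comp_def], roots_multiset_prod_X_sub_C,
    ← Multiset.map_map] at hroots
  exact Multiset.map_injective RCLike.ofReal_injective hroots.symm

theorem X_sq_sub_C_mul_X_sub_C_eq_mul (p q : ℝ) (h : 0 ≤ p ^ 2 + 4 * q) :
    (X ^ 2 - C p * X - C q : ℝ[X]) =
      (X - C ((p + √(p ^ 2 + 4 * q)) / 2)) * (X - C ((p - √(p ^ 2 + 4 * q)) / 2)) := by
  have hsq := Real.sq_sqrt h
  have hsum : (p + √(p ^ 2 + 4 * q)) / 2 + (p - √(p ^ 2 + 4 * q)) / 2 = p := by ring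
  have hprod : (p + √(p ^ 2 + 4 * q)) / 2 * ((p - √(p ^ 2 + 4 * q)) / 2) = -q := by
    linear_combination (-1 / 4 : ℝ) * hsq
  calc (X ^ 2 - C p * X - C q : ℝ[X])
      = X ^ 2 - C ((p + √(p ^ 2 + 4 * q)) / 2 + (p - √(p ^ 2 + 4 * q)) / 2) * X
          + C ((p + √(p ^ 2 + 4 * q)) / 2 * ((p - √(p ^ 2 + 4 * q)) / 2)) := by
        rw [hsum, hprod, C_neg, sub_eq_add_neg]
    _ = _ := by simp only [C_add, C_mul]; ring

theorem List.ofFn_eq_of_antitone_of_map_eq {α : Type*} [LinearOrder α] {k : ℕ} {μ : Fin k → α}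
    (hμ : Antitone μ) {L : List α} (hL : L.SortedGE) (h : univ.val.map μ = L) :
    List.ofFn μ = L :=
  List.Perm.eq_of_sortedGE hμ.sortedGE_ofFn hL (by rwa [← Multiset.coe_eq_coe, ← Fin.univ_val_map])

theorem List.sortedGE_cons_replicate_append_cons_replicate {α : Type*} [LinearOrder α]
    {x y z w : α} (hyx : y ≤ x) (hzy : z ≤ y) (hwz : w ≤ z) (a b : ℕ) :
    (x :: (replicate a y ++ z :: replicate b w)).SortedGE := by
  rw [sortedGE_iff_pairwise]
  simp only [pairwise_cons, pairwise_append, pairwise_replicate, mem_append, mem_cons,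
    mem_replicate, ge_iff_le]
  refine ⟨?_, Or.inr le_rfl, ⟨?_, Or.inr le_rfl⟩, ?_⟩
  · rintro c (⟨-, rfl⟩ | rfl | ⟨-, rfl⟩) <;> order
  · rintro c ⟨-, rfl⟩; order
  · rintro c ⟨-, rfl⟩ e (rfl | ⟨-, rfl⟩) <;> order

theorem Antitone.apply_zero_and_apply_of_map_eq {α : Type*} [LinearOrder α] {k a b : ℕ}
    {μ : Fin k → α} (hμ : Antitone μ) {x y z w : α} (hyx : y ≤ x) (hzy : z ≤ y) (hwz : w ≤ z)
    (h : univ.val.map μ = x ::ₘ z ::ₘ (Multiset.replicate a y + Multiset.replicate b w))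
    (h0 : 0 < k) (hk : a + 2 < k) :
    μ ⟨0, h0⟩ = x ∧ μ ⟨a + 2, hk⟩ = w := by
  have hμL := List.ofFn_eq_of_antitone_of_map_eq hμ
    (List.sortedGE_cons_replicate_append_cons_replicate hyx hzy hwz a b) (by
      rw [h, ← Multiset.cons_coe, ← Multiset.coe_add, ← Multiset.cons_coe,
        Multiset.add_cons, Multiset.coe_replicate, Multiset.coe_replicate])
  have hb : 0 < b := by
    have := congrArg List.length hμL
    simp only [List.length_ofFn, List.length_cons, List.length_append, List.length_replicate] at this
    omega
  have hx := congrArg (fun l => l[0]?) hμL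
  have hw := congrArg (fun l => l[a + 2]?) hμL
  simp only [List.getElem?_ofFn, dif_pos h0, dif_pos hk] at hx hw
  constructor
  · simpa using hx
  · simpa [hb] using hw

/-- Let `j ≥ 1`, `n = 2j+4`, and `A = J_n - I_n + D` where `D` is a diagonal
`(0,1)`-matrix with exactly `j+2` ones on the diagonal (the complete graph `K_{2j+4}` with
self-loops on `j+2` vertices). Then the eigenvalues of `A` are
`((2j+3) + √(4j²+16j+17))/2`, `0` with multiplicity `j+1`, `-1` with multiplicity `j+1`,
and `((2j+3) - √(4j²+16j+17))/2`; consequently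
`λ_1(A) - λ_{n-j}(A) = ((2j+5) + √(4j²+16j+17))/2`. -/
theorem closed_complete_graph_spectrum (j : ℕ)
    (D : Matrix (Fin (2 * j + 4)) (Fin (2 * j + 4)) ℝ) (hDdiag : D.IsDiag)
    (hD01 : ∀ a, D a a = 0 ∨ D a a = 1)
    (hDcard : (Finset.univ.filter fun a => D a a = 1).card = j + 2)
    (A : Matrix (Fin (2 * j + 4)) (Fin (2 * j + 4)) ℝ)
    (hAdef : A = (Matrix.of fun (_ : Fin (2 * j + 4)) (_ : Fin (2 * j + 4)) => (1 : ℝ))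
        - 1 + D)
    (hA : A.IsHermitian) :
    (Finset.univ.val.map hA.eigenvalues =
      ((2 * (j : ℝ) + 3 + Real.sqrt (4 * (j : ℝ) ^ 2 + 16 * (j : ℝ) + 17)) / 2) ::ₘ
        ((2 * (j : ℝ) + 3 - Real.sqrt (4 * (j : ℝ) ^ 2 + 16 * (j : ℝ) + 17)) / 2) ::ₘ
        (Multiset.replicate (j + 1) (0 : ℝ) + Multiset.replicate (j + 1) (-1 : ℝ))) ∧
    ∀ μ : Fin (2 * j + 4) → ℝ, Antitone μ →
      Finset.univ.val.map μ = Finset.univ.val.map hA.eigenvalues →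
      μ ⟨0, by omega⟩ - μ ⟨j + 3, by omega⟩ =
        (2 * (j : ℝ) + 5 + Real.sqrt (4 * (j : ℝ) ^ 2 + 16 * (j : ℝ) + 17)) / 2 := by
  have hquad := X_sq_sub_C_mul_X_sub_C_eq_mul (2 * j + 3) (j + 2) (by positivity)
  rw [show (2 * (j : ℝ) + 3) ^ 2 + 4 * (j + 2) = 4 * j ^ 2 + 16 * j + 17 by ring] at hquad
  set s := √(4 * (j : ℝ) ^ 2 + 16 * (j : ℝ) + 17)
  have hchar : A.charpoly = X ^ (j + 1) * (X + 1) ^ (j + 1) *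
      ((X - C ((2 * j + 3 + s) / 2)) * (X - C ((2 * j + 3 - s) / 2))) := by
    rw [hAdef, ← hDdiag.diagonal_diag, charpoly_allOnes_sub_one_add_diagonal (d := D.diag)
      (b := j + 1) hD01 (by rw [Fintype.card_fin]; omega) hDcard, ← hquad]
    push_cast
    ring_nf
  have hspec : univ.val.map hA.eigenvalues = (2 * j + 3 + s) / 2 ::ₘ (2 * j + 3 - s) / 2 ::ₘ
      (Multiset.replicate (j + 1) 0 + Multiset.replicate (j + 1) (-1)) := by
    refine hA.eigenvalues_eq_of_charpoly_eq ?_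
    rw [hchar]
    simp only [Multiset.map_cons, Multiset.map_add, Multiset.map_replicate, Multiset.prod_cons,
      Multiset.prod_add, Multiset.prod_replicate, Real.ringHom_apply, map_zero, map_neg, map_one,
      sub_zero, sub_neg_eq_add]
    ring
  refine ⟨hspec, fun μ hμ hμA => ?_⟩
  have hs_lo : 2 * (j : ℝ) + 3 ≤ s := Real.le_sqrt_of_sq_le (by nlinarith)
  have hs_hi : s ≤ 2 * (j : ℝ) + 5 := Real.sqrt_le_iff.mpr ⟨by positivity, by nlinarith⟩
  obtain ⟨h0, h3⟩ := hμ.apply_zero_and_apply_of_map_eq (y := 0) (by linarith) (by linarith)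
    (by linarith) (hμA.trans hspec) (by omega) (show j + 1 + 2 < 2 * j + 4 by omega)
  rw [h0, h3]
  ring
end
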